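/- In the one-sample setting, there exists a universal constant c > 0 such that for every sample size n, every realization of the sample and every multi-index 𝐣 = (j₁,…,j_p) ∈ ℕ^p, the difference between the empirical copula coefficient computed with estimated ranks and the one computed with the true probability-integral transforms satisfies |ρ̂_𝐣 − ρ̃_𝐣| ≤ c Σ_{i=1}^p S_i · max(j_i,1)^{5/2} · Π_{u ≠ i} max(j_u,1)^{1/2}, where S_i = sup_x |F̂_i(x) − F_i(x)|. -/

import Mathlib

open MeasureTheory ProbabilityTheory Filter

noncomputable section

/-- Shifted (normalized) Legendre polynomials on `[0,1]`:
`L₀ = 1`, `L₁(x) = √3 (2x-1)`, and for `n ≥ 1`,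
`(n+1) L_{n+1}(x) = √((2n+1)(2n+3)) (2x-1) L_n(x) - (n √(2n+3)/√(2n-1)) L_{n-1}(x)`. -/
def Leg : ℕ → ℝ → ℝ
  | 0, _ => 1
  | 1, x => Real.sqrt 3 * (2 * x - 1)
  | (n + 2), x =>
      (Real.sqrt ((2 * (n : ℝ) + 3) * (2 * (n : ℝ) + 5)) * (2 * x - 1) * Leg (n + 1) x
        - (((n : ℝ) + 1) * Real.sqrt (2 * (n : ℝ) + 5) / Real.sqrt (2 * (n : ℝ) + 1))
            * Leg n x) / ((n : ℝ) + 2)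

variable {Ω : Type*} [MeasurableSpace Ω]

/-- Empirical cumulative distribution function of the sample `Z 0, …, Z (n-1)`. -/
def ecdf (Z : ℕ → Ω → ℝ) (n : ℕ) (ω : Ω) (x : ℝ) : ℝ :=
  (n : ℝ)⁻¹ * ∑ i ∈ Finset.range n, (if Z i ω ≤ x then (1 : ℝ) else 0)

/-- Pseudo-observation `Û_{i,j}` : empirical cdf of coordinate `j` evaluated at `X_{i,j}`. -/
def Uhat {q : ℕ} (X : ℕ → Fin q → Ω → ℝ) (n i : ℕ) (j : Fin q) (ω : Ω) : ℝ :=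
  ecdf (fun i' => X i' j) n ω (X i j ω)

/-- Empirical copula coefficient `ρ̂_J` computed from the rank-transformed sample. -/
def rhohat {q : ℕ} (X : ℕ → Fin q → Ω → ℝ) (n : ℕ) (J : Fin q → ℕ) (ω : Ω) : ℝ :=
  (n : ℝ)⁻¹ * ∑ i ∈ Finset.range n, ∏ j, Leg (J j) (Uhat X n i j ω)

/-- Monic-style standard Legendre polynomials via Bonnet recurrence. -/
def LegQ : ℕ → ℝ → ℝ
  | 0, _ => 1
  | 1, x => x
  | (n + 2), x =>
      ((2 * (n : ℝ) + 3) * x * LegQ (n + 1) x - ((n : ℝ) + 1) * LegQ n x) / ((n : ℝ) + 2)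

/-- Derivative of `LegQ`. -/
def dLegQ : ℕ → ℝ → ℝ
  | 0, _ => 0
  | 1, _ => 1
  | (n + 2), x =>
      ((2 * (n : ℝ) + 3) * (LegQ (n + 1) x + x * dLegQ (n + 1) x)
        - ((n : ℝ) + 1) * dLegQ n x) / ((n : ℝ) + 2)

lemma nadd2_ne (n : ℕ) : ((n : ℝ) + 2) ≠ 0 := by positivity

lemma hasDerivAt_LegQ : ∀ n x, HasDerivAt (LegQ n) (dLegQ n x) x := by
  have key : ∀ n, (∀ x, HasDerivAt (LegQ n) (dLegQ n x) x) ∧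
      (∀ x, HasDerivAt (LegQ (n + 1)) (dLegQ (n + 1) x) x) := by
    intro n
    induction n with
    | zero =>
        constructor
        · intro x; simpa [LegQ, dLegQ] using (hasDerivAt_const x (1 : ℝ))
        · intro x; simpa [LegQ, dLegQ] using (hasDerivAt_id' x)
    | succ n ih =>
        refine ⟨ih.2, ?_⟩
        intro x
        have h1 := ih.1 x
        have h2 := ih.2 x
        have : HasDerivAt (fun x => ((2 * (n : ℝ) + 3) * x * LegQ (n + 1) x
            - ((n : ℝ) + 1) * LegQ n x) / ((n : ℝ) + 2))
            (dLegQ (n + 2) x) x := by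
          have hmul : HasDerivAt (fun x => (2 * (n : ℝ) + 3) * x * LegQ (n + 1) x)
              ((2 * (n : ℝ) + 3) * LegQ (n + 1) x
                + (2 * (n : ℝ) + 3) * x * dLegQ (n + 1) x) x := by
            have := (((hasDerivAt_id x).const_mul (2 * (n : ℝ) + 3)).mul h2)
            refine this.congr_deriv ?_
            simp only [id]
            ring
          have := (hmul.sub (h1.const_mul ((n : ℝ) + 1))).div_const ((n : ℝ) + 2)
          refine this.congr_deriv ?_
          simp [dLegQ]
          ring
        exact this.congr_of_eventuallyEq (by filter_upwards with y; simp [LegQ])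
  exact fun n => (key n).1

lemma LegQ_AB : ∀ n, (∀ x, dLegQ (n + 1) x = x * dLegQ n x + ((n : ℝ) + 1) * LegQ n x) ∧
    (∀ x, x * dLegQ (n + 1) x = dLegQ n x + ((n : ℝ) + 1) * LegQ (n + 1) x) := by
  intro n
  induction n with
  | zero => constructor <;> intro x <;> simp [LegQ, dLegQ]
  | succ n ih =>
      obtain ⟨hA, hB⟩ := ih
      constructor
      · intro x
        have hb := hB x
        simp only [dLegQ, LegQ]
        push_cast
        rw [div_eq_iff (nadd2_ne n)]
        linear_combination ((n : ℝ) + 1) * hb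
      · intro x
        have hb := hB x
        have ha := hA x
        simp only [dLegQ, LegQ]
        push_cast
        rw [mul_div_assoc', mul_div_assoc', add_div' _ _ _ (nadd2_ne n),
          div_eq_div_iff (nadd2_ne n) (nadd2_ne n)]
        linear_combination ((2 * (n : ℝ) + 3) * x * ((n:ℝ)+2)) * hb - (((n : ℝ) + 2)*((n:ℝ)+2)) * ha

lemma LegQ_diff (n : ℕ) : Differentiable ℝ (LegQ n) :=
  fun x => (hasDerivAt_LegQ n x).differentiableAt

/-- Identity (C). -/
lemma LegQ_C (n : ℕ) (x : ℝ) :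
    (1 - x ^ 2) * dLegQ (n + 1) x = ((n : ℝ) + 1) * (LegQ n x - x * LegQ (n + 1) x) := by
  obtain ⟨hA, hB⟩ := LegQ_AB n
  linear_combination hA x - x * hB x

lemma dLegQ_diff : ∀ n, Differentiable ℝ (dLegQ n) := by
  have key : ∀ n, Differentiable ℝ (dLegQ n) ∧ Differentiable ℝ (dLegQ (n + 1)) := by
    intro n
    induction n with
    | zero =>
        refine ⟨?_, ?_⟩ <;>
          · have : ∀ m c, (∀ x : ℝ, dLegQ m x = c) → Differentiable ℝ (dLegQ m) := by
              intro m c h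
              have : dLegQ m = fun _ => c := funext h
              rw [this]; exact differentiable_const c
            first
              | exact this 0 0 (fun x => rfl)
              | exact this 1 1 (fun x => rfl)
    | succ n ih =>
        refine ⟨ih.2, ?_⟩
        have : dLegQ (n + 2) = fun x => ((2 * (n : ℝ) + 3) * (LegQ (n + 1) x + x * dLegQ (n + 1) x)
            - ((n : ℝ) + 1) * dLegQ n x) / ((n : ℝ) + 2) := funext fun x => by simp [dLegQ]
        rw [this]
        exact ((((LegQ_diff (n + 1)).add (differentiable_id.mul ih.2)).const_mul _).sub
          (ih.1.const_mul _)).div_const _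
  exact fun n => (key n).1

/-- The Legendre ODE. -/
lemma LegQ_ODE (n : ℕ) (x : ℝ) :
    (1 - x ^ 2) * deriv (dLegQ n) x = 2 * x * dLegQ n x - (n : ℝ) * ((n : ℝ) + 1) * LegQ n x := by
  cases n with
  | zero =>
      have h0 : dLegQ 0 = fun _ : ℝ => (0 : ℝ) := funext fun x => rfl
      simp [h0, LegQ, dLegQ]
  | succ n =>
      obtain ⟨hA, hB⟩ := LegQ_AB n
      have hd : HasDerivAt (dLegQ (n + 1)) (deriv (dLegQ (n + 1)) x) x :=
        ((dLegQ_diff (n + 1)) x).hasDerivAt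
      have h1 : HasDerivAt (fun x => (1 - x ^ 2) * dLegQ (n + 1) x)
          ((-(2 * x)) * dLegQ (n + 1) x + (1 - x ^ 2) * deriv (dLegQ (n + 1)) x) x := by
        have hp : HasDerivAt (fun x : ℝ => 1 - x ^ 2) (-(2 * x)) x := by
          simpa using ((hasDerivAt_pow 2 x).const_sub 1)
        exact hp.mul hd
      have h2 : HasDerivAt (fun x => ((n : ℝ) + 1) * (LegQ n x - x * LegQ (n + 1) x))
          (((n : ℝ) + 1) * (dLegQ n x - (LegQ (n + 1) x + x * dLegQ (n + 1) x))) x := by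
        have := ((hasDerivAt_LegQ n x).sub
          ((hasDerivAt_id x).mul (hasDerivAt_LegQ (n + 1) x))).const_mul ((n : ℝ) + 1)
        refine this.congr_deriv ?_
        simp only [id_eq, one_mul]
        try ring
      have heq : (fun x => (1 - x ^ 2) * dLegQ (n + 1) x)
          = fun x => ((n : ℝ) + 1) * (LegQ n x - x * LegQ (n + 1) x) :=
        funext fun x => LegQ_C n x
      rw [heq] at h1
      have := h1.unique h2
      push_cast
      linear_combination this - ((n : ℝ) + 1) * hB x

lemma LegQ_one : ∀ n, LegQ n 1 = 1 := by
  have key : ∀ n, LegQ n 1 = 1 ∧ LegQ (n + 1) 1 = 1 := by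
    intro n
    induction n with
    | zero => exact ⟨rfl, rfl⟩
    | succ n ih =>
        refine ⟨ih.2, ?_⟩
        simp only [LegQ, ih.1, ih.2]
        field_simp
        ring
  exact fun n => (key n).1

lemma LegQ_neg_one : ∀ n, LegQ n (-1) = (-1) ^ n := by
  have key : ∀ n, LegQ n (-1) = (-1) ^ n ∧ LegQ (n + 1) (-1) = (-1) ^ (n + 1) := by
    intro n
    induction n with
    | zero => simp [LegQ]
    | succ n ih =>
        refine ⟨ih.2, ?_⟩
        simp only [LegQ, ih.1, ih.2]
        rw [div_eq_iff (nadd2_ne n)]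
        ring
  exact fun n => (key n).1

lemma LegQ_abs_le (n : ℕ) {x : ℝ} (hx : x ∈ Set.Icc (-1 : ℝ) 1) : |LegQ n x| ≤ 1 := by
  cases n with
  | zero => simp [LegQ]
  | succ n =>
      set N : ℝ := ((n : ℝ) + 1) * ((n : ℝ) + 2) with hN
      have hNpos : 0 < N := by positivity
      set f : ℝ → ℝ := fun x => N * LegQ (n + 1) x ^ 2 + (1 - x ^ 2) * dLegQ (n + 1) x ^ 2
        with hf
      have hf' : ∀ x, HasDerivAt f (2 * x * dLegQ (n + 1) x ^ 2) x := by
        intro x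
        have h1 : HasDerivAt (fun x => N * LegQ (n + 1) x ^ 2)
            (N * (2 * LegQ (n + 1) x * dLegQ (n + 1) x)) x := by
          have := (((hasDerivAt_LegQ (n + 1) x).pow 2).const_mul N)
          refine this.congr_deriv ?_
          push_cast
          ring
        have hd : HasDerivAt (dLegQ (n + 1)) (deriv (dLegQ (n + 1)) x) x :=
          ((dLegQ_diff (n + 1)) x).hasDerivAt
        have h2 : HasDerivAt (fun x => (1 - x ^ 2) * dLegQ (n + 1) x ^ 2)
            ((-(2 * x)) * dLegQ (n + 1) x ^ 2
              + (1 - x ^ 2) * (2 * dLegQ (n + 1) x * deriv (dLegQ (n + 1)) x)) x := by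
          have hp : HasDerivAt (fun x : ℝ => 1 - x ^ 2) (-(2 * x)) x := by
            simpa using ((hasDerivAt_pow 2 x).const_sub 1)
          refine (hp.mul (hd.pow 2)).congr_deriv ?_
          push_cast
          simp only [Pi.pow_apply]
          ring
        have := h1.add h2
        refine this.congr_deriv ?_
        have hode := LegQ_ODE (n + 1) x
        push_cast at hode
        linear_combination (2 * dLegQ (n + 1) x) * hode
      have hcont : Continuous f := by
        apply Continuous.add
        · exact (continuous_const.mul (((LegQ_diff (n+1)).continuous).pow 2))
        · exact ((continuous_const.sub (continuous_pow 2)).mul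
            (((dLegQ_diff (n+1)).continuous).pow 2))
      have hmono : MonotoneOn f (Set.Icc (0 : ℝ) 1) := by
        apply monotoneOn_of_deriv_nonneg (convex_Icc 0 1) hcont.continuousOn
        · intro x hx
          exact ((hf' x).differentiableAt).differentiableWithinAt
        · intro x hx
          rw [(hf' x).deriv]
          rw [interior_Icc] at hx
          have h2 := sq_nonneg (dLegQ (n + 1) x)
          nlinarith [hx.1]
      have hanti : AntitoneOn f (Set.Icc (-1 : ℝ) 0) := by
        apply antitoneOn_of_deriv_nonpos (convex_Icc (-1) 0) hcont.continuousOn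
        · intro x hx
          exact ((hf' x).differentiableAt).differentiableWithinAt
        · intro x hx
          rw [(hf' x).deriv]
          rw [interior_Icc] at hx
          have hx0 : x ≤ 0 := le_of_lt hx.2
          have : dLegQ (n + 1) x ^ 2 ≥ 0 := sq_nonneg _
          nlinarith
      have hfend1 : f 1 = N := by simp [hf, LegQ_one]
      have hfendm1 : f (-1) = N := by
        simp [hf, LegQ_neg_one]
        rw [← pow_mul, mul_comm (n+1) 2, pow_mul]
        simp
      have hfle : f x ≤ N := by
        rcases le_or_gt 0 x with h0 | h0
        · have := hmono (Set.mem_Icc.mpr ⟨h0, hx.2⟩) (Set.mem_Icc.mpr ⟨zero_le_one, le_refl 1⟩) hx.2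
          rwa [hfend1] at this
        · have := hanti (Set.mem_Icc.mpr ⟨le_refl (-1 : ℝ), by norm_num⟩)
            (Set.mem_Icc.mpr ⟨hx.1, le_of_lt h0⟩) hx.1
          rwa [hfendm1] at this
      have hsq : LegQ (n + 1) x ^ 2 ≤ 1 := by
        have h1 : (1 - x ^ 2) * dLegQ (n + 1) x ^ 2 ≥ 0 := by
          apply mul_nonneg _ (sq_nonneg _)
          nlinarith [hx.1, hx.2]
        have : N * LegQ (n + 1) x ^ 2 ≤ N := by
          have := hfle
          simp only [hf] at this
          linarith
        exact le_of_mul_le_mul_left (by linarith) hNpos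
      exact (sq_le_one_iff_abs_le_one _).mp hsq

lemma dLegQ_step (n : ℕ) (x : ℝ) :
    dLegQ (n + 2) x = dLegQ n x + (2 * (n : ℝ) + 3) * LegQ (n + 1) x := by
  obtain ⟨hA1, _⟩ := LegQ_AB (n + 1)
  obtain ⟨_, hB⟩ := LegQ_AB n
  have h := hA1 x
  push_cast at h
  linear_combination h + hB x

lemma dLegQ_abs_le : ∀ n, ∀ x ∈ Set.Icc (-1 : ℝ) 1, |dLegQ n x| ≤ (n : ℝ) ^ 2 := by
  have key : ∀ n, (∀ x ∈ Set.Icc (-1 : ℝ) 1, |dLegQ n x| ≤ (n : ℝ) ^ 2) ∧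
      (∀ x ∈ Set.Icc (-1 : ℝ) 1, |dLegQ (n + 1) x| ≤ ((n : ℝ) + 1) ^ 2) := by
    intro n
    induction n with
    | zero =>
        constructor <;> intro x hx
        · simp [dLegQ]
        · simp only [dLegQ]
          norm_num
    | succ n ih =>
        refine ⟨by push_cast; exact ih.2, ?_⟩
        intro x hx
        rw [dLegQ_step n x]
        calc |dLegQ n x + (2 * (n : ℝ) + 3) * LegQ (n + 1) x|
            ≤ |dLegQ n x| + |(2 * (n : ℝ) + 3) * LegQ (n + 1) x| := abs_add_le _ _
          _ ≤ (n : ℝ) ^ 2 + (2 * (n : ℝ) + 3) * 1 := by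
              gcongr
              · exact ih.1 x hx
              · rw [abs_mul, abs_of_nonneg (by positivity : (0:ℝ) ≤ 2 * (n : ℝ) + 3)]
                gcongr
                exact LegQ_abs_le (n + 1) hx
          _ ≤ ((n + 1 : ℕ) + 1 : ℝ) ^ 2 := by push_cast; nlinarith
  intro n
  cases n with
  | zero => exact (key 0).1
  | succ n => exact fun x hx => by push_cast; exact (key n).2 x hx


lemma Leg_eq : ∀ n x, Leg n x = Real.sqrt (2 * (n : ℝ) + 1) * LegQ n (2 * x - 1) := by
  have key : ∀ n, (∀ x, Leg n x = Real.sqrt (2 * (n : ℝ) + 1) * LegQ n (2 * x - 1)) ∧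
      (∀ x, Leg (n + 1) x = Real.sqrt (2 * ((n : ℝ) + 1) + 1) * LegQ (n + 1) (2 * x - 1)) := by
    intro n
    induction n with
    | zero =>
        constructor <;> intro x
        · simp [Leg, LegQ]
        · norm_num [Leg, LegQ]
    | succ n ih =>
        refine ⟨by intro x; rw [ih.2 x]; norm_num, ?_⟩
        intro x
        have h1 := ih.1 x
        have h2 := ih.2 x
        simp only [Leg]
        rw [h1, h2]
        have e1 : Real.sqrt ((2 * (n : ℝ) + 3) * (2 * (n : ℝ) + 5))
            = Real.sqrt (2 * (n : ℝ) + 3) * Real.sqrt (2 * (n : ℝ) + 5) :=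
          Real.sqrt_mul (by positivity) _
        have e2 : Real.sqrt (2 * (n : ℝ) + 3) * Real.sqrt (2 * (n : ℝ) + 3)
            = 2 * (n : ℝ) + 3 := Real.mul_self_sqrt (by positivity)
        have e3 : Real.sqrt (2 * (n : ℝ) + 1) ≠ 0 := by positivity
        have hy : LegQ (n + 2) (2 * x - 1) = ((2 * (n : ℝ) + 3) * (2 * x - 1) *
            LegQ (n + 1) (2 * x - 1) - ((n : ℝ) + 1) * LegQ n (2 * x - 1)) / ((n : ℝ) + 2) := by
          simp [LegQ]
        push_cast
        rw [hy, e1]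
        have h2n1 : (2 * ((n : ℝ) + 1) + 1) = 2 * (n : ℝ) + 3 := by ring
        have h2n5 : (2 * ((n : ℝ) + 1 + 1) + 1) = 2 * (n : ℝ) + 5 := by ring
        rw [h2n1, h2n5]
        have cancel : (((n : ℝ) + 1) * Real.sqrt (2 * (n : ℝ) + 5) / Real.sqrt (2 * (n : ℝ) + 1))
            * (Real.sqrt (2 * (n : ℝ) + 1) * LegQ n (2 * x - 1))
            = ((n : ℝ) + 1) * Real.sqrt (2 * (n : ℝ) + 5) * LegQ n (2 * x - 1) := by
          field_simp
        rw [cancel, mul_div_assoc']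
        congr 1
        linear_combination ((2 * x - 1) * Real.sqrt (2 * (n : ℝ) + 5)
          * LegQ (n + 1) (2 * x - 1)) * e2
  exact fun n => (key n).1

lemma maxc_pos (k : ℕ) : (0:ℝ) < ((max k 1 : ℕ) : ℝ) := by
  have : (1:ℕ) ≤ max k 1 := le_max_right _ _
  exact_mod_cast lt_of_lt_of_le zero_lt_one (by exact_mod_cast this)

lemma sqrt_le_aux (k : ℕ) :
    Real.sqrt (2 * (k : ℝ) + 1) ≤ Real.sqrt 3 * ((max k 1 : ℕ) : ℝ) ^ ((1:ℝ)/2) := by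
  have hm1 : (1:ℝ) ≤ ((max k 1 : ℕ) : ℝ) := by exact_mod_cast (le_max_right k 1)
  have hk : (k : ℝ) ≤ ((max k 1 : ℕ) : ℝ) := by exact_mod_cast (le_max_left k 1)
  have h1 : (2 * (k : ℝ) + 1) ≤ 3 * ((max k 1 : ℕ) : ℝ) := by linarith
  calc Real.sqrt (2 * (k : ℝ) + 1) ≤ Real.sqrt (3 * ((max k 1 : ℕ) : ℝ)) :=
        Real.sqrt_le_sqrt h1
    _ = Real.sqrt 3 * Real.sqrt ((max k 1 : ℕ) : ℝ) := Real.sqrt_mul (by norm_num) _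
    _ = Real.sqrt 3 * ((max k 1 : ℕ) : ℝ) ^ ((1:ℝ)/2) := by
        congr 1
        rw [Real.sqrt_eq_rpow]

lemma Leg_bound (k : ℕ) {u : ℝ} (hu : u ∈ Set.Icc (0:ℝ) 1) :
    |Leg k u| ≤ Real.sqrt 3 * ((max k 1 : ℕ) : ℝ) ^ ((1:ℝ)/2) := by
  rw [Leg_eq]
  have hy : 2 * u - 1 ∈ Set.Icc (-1:ℝ) 1 := ⟨by linarith [hu.1], by linarith [hu.2]⟩
  calc |Real.sqrt (2 * (k : ℝ) + 1) * LegQ k (2 * u - 1)|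
      = Real.sqrt (2 * (k : ℝ) + 1) * |LegQ k (2 * u - 1)| := by
        rw [abs_mul, abs_of_nonneg (Real.sqrt_nonneg _)]
    _ ≤ Real.sqrt (2 * (k : ℝ) + 1) * 1 := by
        gcongr
        exact LegQ_abs_le k hy
    _ ≤ Real.sqrt 3 * ((max k 1 : ℕ) : ℝ) ^ ((1:ℝ)/2) := by
        rw [mul_one]; exact sqrt_le_aux k

lemma LegQ_lip (k : ℕ) {y y' : ℝ} (hy : y ∈ Set.Icc (-1:ℝ) 1) (hy' : y' ∈ Set.Icc (-1:ℝ) 1) :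
    |LegQ k y - LegQ k y'| ≤ (k : ℝ) ^ 2 * |y - y'| := by
  have h := Convex.norm_image_sub_le_of_norm_hasDerivWithin_le
    (f := LegQ k) (f' := dLegQ k) (C := (k : ℝ) ^ 2) (s := Set.Icc (-1:ℝ) 1)
    (fun x _ => (hasDerivAt_LegQ k x).hasDerivWithinAt)
    (fun x hx => by rw [Real.norm_eq_abs]; exact dLegQ_abs_le k x hx)
    (convex_Icc _ _) hy' hy
  simpa [Real.norm_eq_abs] using h

lemma Leg_lip (k : ℕ) {u u' : ℝ} (hu : u ∈ Set.Icc (0:ℝ) 1) (hu' : u' ∈ Set.Icc (0:ℝ) 1) :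
    |Leg k u - Leg k u'| ≤ 2 * Real.sqrt 3 * ((max k 1 : ℕ) : ℝ) ^ ((5:ℝ)/2) * |u - u'| := by
  set m : ℝ := ((max k 1 : ℕ) : ℝ) with hm
  have hm1 : (1:ℝ) ≤ m := by rw [hm]; exact_mod_cast Nat.one_le_iff_ne_zero.mpr (by simp)
  have hm0 : (0:ℝ) < m := lt_of_lt_of_le zero_lt_one hm1
  have hk : (k : ℝ) ≤ m := by rw [hm]; exact_mod_cast le_max_left k 1
  have hy : 2 * u - 1 ∈ Set.Icc (-1:ℝ) 1 := ⟨by linarith [hu.1], by linarith [hu.2]⟩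
  have hy' : 2 * u' - 1 ∈ Set.Icc (-1:ℝ) 1 := ⟨by linarith [hu'.1], by linarith [hu'.2]⟩
  rw [Leg_eq, Leg_eq, ← mul_sub, abs_mul, abs_of_nonneg (Real.sqrt_nonneg _)]
  have step1 : |LegQ k (2 * u - 1) - LegQ k (2 * u' - 1)| ≤ (k : ℝ) ^ 2 * (2 * |u - u'|) := by
    have := LegQ_lip k hy hy'
    have e : |(2 * u - 1) - (2 * u' - 1)| = 2 * |u - u'| := by
      rw [show (2 * u - 1) - (2 * u' - 1) = 2 * (u - u') by ring, abs_mul]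
      norm_num
    rw [e] at this
    exact this
  calc Real.sqrt (2 * (k : ℝ) + 1) * |LegQ k (2 * u - 1) - LegQ k (2 * u' - 1)|
      ≤ (Real.sqrt 3 * m ^ ((1:ℝ)/2)) * ((k : ℝ) ^ 2 * (2 * |u - u'|)) := by
        exact mul_le_mul (sqrt_le_aux k) step1 (abs_nonneg _) (by positivity)
    _ ≤ (Real.sqrt 3 * m ^ ((1:ℝ)/2)) * (m ^ 2 * (2 * |u - u'|)) := by
        have hk2 : (k : ℝ) ^ 2 ≤ m ^ 2 := by nlinarith [Nat.cast_nonneg (α := ℝ) k]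
        gcongr
    _ = 2 * Real.sqrt 3 * (m ^ ((1:ℝ)/2) * m ^ (2:ℝ)) * |u - u'| := by
        rw [Real.rpow_two]
        ring
    _ = 2 * Real.sqrt 3 * m ^ ((5:ℝ)/2) * |u - u'| := by
        rw [← Real.rpow_add hm0]
        norm_num

lemma prod_diff_bound {ι : Type*} [DecidableEq ι] (s : Finset ι) (a b M D : ι → ℝ)
    (ha : ∀ j ∈ s, |a j| ≤ M j) (hb : ∀ j ∈ s, |b j| ≤ M j)
    (hD : ∀ j ∈ s, |a j - b j| ≤ D j) :
    |∏ j ∈ s, a j - ∏ j ∈ s, b j| ≤ ∑ j ∈ s, D j * ∏ u ∈ s.erase j, M u := by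
  induction s using Finset.induction_on with
  | empty => simp
  | insert i s hi ih =>
      have hM0 : ∀ j ∈ s, 0 ≤ M j := fun j hj => le_trans (abs_nonneg _) (ha j (Finset.mem_insert_of_mem hj))
      have ha' : ∀ j ∈ s, |a j| ≤ M j := fun j hj => ha j (Finset.mem_insert_of_mem hj)
      have hb' : ∀ j ∈ s, |b j| ≤ M j := fun j hj => hb j (Finset.mem_insert_of_mem hj)
      have hD' : ∀ j ∈ s, |a j - b j| ≤ D j := fun j hj => hD j (Finset.mem_insert_of_mem hj)
      have IH := ih ha' hb' hD'
      rw [Finset.prod_insert hi, Finset.prod_insert hi]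
      have key : a i * ∏ j ∈ s, a j - b i * ∏ j ∈ s, b j
          = a i * (∏ j ∈ s, a j - ∏ j ∈ s, b j) + (a i - b i) * ∏ j ∈ s, b j := by ring
      rw [key]
      calc |a i * (∏ j ∈ s, a j - ∏ j ∈ s, b j) + (a i - b i) * ∏ j ∈ s, b j|
          ≤ |a i| * |∏ j ∈ s, a j - ∏ j ∈ s, b j| + |a i - b i| * |∏ j ∈ s, b j| := by
            refine le_trans (abs_add_le _ _) ?_
            rw [abs_mul, abs_mul]
        _ ≤ M i * (∑ j ∈ s, D j * ∏ u ∈ s.erase j, M u) + D i * ∏ j ∈ s, M j := by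
            have hbM : |∏ j ∈ s, b j| ≤ ∏ j ∈ s, M j := by
              calc |∏ j ∈ s, b j| = ∏ j ∈ s, |b j| := by rw [Finset.abs_prod]
                _ ≤ ∏ j ∈ s, M j := Finset.prod_le_prod (fun j _ => abs_nonneg _) hb'
            have hmem := Finset.mem_insert_self i s
            have h1 := mul_le_mul (ha i hmem) IH (abs_nonneg _)
              (le_trans (abs_nonneg _) (ha i hmem))
            have h2 := mul_le_mul (hD i hmem) hbM (abs_nonneg _)
              (le_trans (abs_nonneg _) (hD i hmem))
            linarith
        _ = ∑ j ∈ insert i s, D j * ∏ u ∈ (insert i s).erase j, M u := by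
            have e2 : ∀ j ∈ s, ∏ u ∈ (insert i s).erase j, M u
                = M i * ∏ u ∈ s.erase j, M u := by
              intro j hj
              have hij : i ≠ j := fun h => hi (h ▸ hj)
              rw [Finset.erase_insert_of_ne hij, Finset.prod_insert
                (fun h => hi (Finset.mem_of_mem_erase h))]
            rw [Finset.sum_insert hi, Finset.erase_insert hi, Finset.mul_sum, add_comm]
            congr 1
            refine Finset.sum_congr rfl fun j hj => ?_
            rw [e2 j hj]
            ring


lemma ecdf_mem_Icc (Z : ℕ → Ω → ℝ) (n : ℕ) (ω : Ω) (x : ℝ) :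
    ecdf Z n ω x ∈ Set.Icc (0:ℝ) 1 := by
  constructor
  · apply mul_nonneg (by positivity)
    exact Finset.sum_nonneg fun i _ => by positivity
  · have h1 : ∑ i ∈ Finset.range n, (if Z i ω ≤ x then (1:ℝ) else 0) ≤ (n : ℝ) := by
      calc ∑ i ∈ Finset.range n, (if Z i ω ≤ x then (1:ℝ) else 0)
          ≤ ∑ i ∈ Finset.range n, (1:ℝ) := Finset.sum_le_sum fun i _ => by split <;> norm_num
        _ = (n : ℝ) := by simp
    calc ecdf Z n ω x ≤ (n : ℝ)⁻¹ * (n : ℝ) :=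
          mul_le_mul_of_nonneg_left h1 (by positivity)
      _ ≤ 1 := by
          rcases Nat.eq_zero_or_pos n with h | h
          · simp [h]
          · rw [inv_mul_cancel₀ (by exact_mod_cast h.ne' : (n:ℝ) ≠ 0)]


/-- **Deterministic bound on the rank effect.** In the one-sample setting there is a
constant `c > 0` such that, for every sample size, every realization of the sample
and every multi-index `J`,
`|ρ̂_J - ρ̃_J| ≤ c ∑ᵢ Sᵢ max(Jᵢ,1)^{5/2} ∏_{u ≠ i} max(J_u,1)^{1/2}`,
where `Sᵢ = sup_x |F̂ᵢ(x) - Fᵢ(x)|`, `ρ̂_J` is the empirical copula coefficient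
computed with estimated ranks and `ρ̃_J` the one computed with the true
probability-integral transforms. -/
theorem rank_effect_bound
    {Ω : Type*} [MeasurableSpace Ω] (P : Measure Ω) [IsProbabilityMeasure P]
    (p : ℕ)
    (X : ℕ → Fin p → Ω → ℝ)
    (hXmeas : ∀ i j, Measurable (X i j))
    -- the observations are iid
    (hindep : iIndepFun
      (fun i ω => fun j : Fin p => X i j ω) P)
    (hident : ∀ i : ℕ,
      IdentDistrib (fun ω => fun j : Fin p => X i j ω)
        (fun ω => fun j : Fin p => X 0 j ω) P P)
    -- the marginal cdfs, assumed continuous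
    (F : Fin p → ℝ → ℝ)
    (hFdef : ∀ j x, F j x = (P {ω | X 0 j ω ≤ x}).toReal)
    (hFcont : ∀ j, Continuous (F j)) :
    ∃ c > (0 : ℝ), ∀ (n : ℕ) (ω : Ω) (J : Fin p → ℕ),
      |rhohat X n J ω
          - (n : ℝ)⁻¹ * ∑ i ∈ Finset.range n, ∏ j, Leg (J j) (F j (X i j ω))|
        ≤ c * ∑ i : Fin p,
            (⨆ x : ℝ, |ecdf (fun i' => X i' i) n ω x - F i x|)
              * ((max (J i) 1 : ℕ) : ℝ) ^ ((5 : ℝ) / 2)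
              * ∏ u ∈ Finset.univ.erase i, ((max (J u) 1 : ℕ) : ℝ) ^ ((1 : ℝ) / 2) := by
  refine ⟨2 * Real.sqrt 3 ^ p, by positivity, ?_⟩
  intro n ω J
  set c : ℝ := 2 * Real.sqrt 3 ^ p with hc
  set S : Fin p → ℝ := fun j => ⨆ x : ℝ, |ecdf (fun i' => X i' j) n ω x - F j x| with hS
  set m : Fin p → ℝ := fun j => ((max (J j) 1 : ℕ) : ℝ) with hmdef
  have hF01 : ∀ j x, F j x ∈ Set.Icc (0:ℝ) 1 := by
    intro j x
    rw [hFdef]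
    constructor
    · exact ENNReal.toReal_nonneg
    · calc (P {ω | X 0 j ω ≤ x}).toReal ≤ (P Set.univ).toReal :=
            ENNReal.toReal_mono (by simp) (measure_mono (Set.subset_univ _))
        _ = 1 := by simp
  have hS0 : ∀ j, 0 ≤ S j := fun j => Real.iSup_nonneg fun x => abs_nonneg _
  have hSub : ∀ (j : Fin p) (x₀ : ℝ),
      |ecdf (fun i' => X i' j) n ω x₀ - F j x₀| ≤ S j := by
    intro j x₀
    apply le_ciSup (f := fun x => |ecdf (fun i' => X i' j) n ω x - F j x|)
    refine ⟨2, ?_⟩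
    rintro _ ⟨x, rfl⟩
    have h1 := ecdf_mem_Icc (fun i' => X i' j) n ω x
    have h2 := hF01 j x
    rw [abs_sub_le_iff]
    constructor <;> [skip; skip] <;>
      · simp only [Set.mem_Icc] at h1 h2
        linarith [h1.1, h1.2, h2.1, h2.2]
  -- the target sum
  set T : ℝ := ∑ i : Fin p, S i * m i ^ ((5:ℝ)/2) * ∏ u ∈ Finset.univ.erase i, m u ^ ((1:ℝ)/2)
    with hT
  have hT0 : 0 ≤ T := by
    apply Finset.sum_nonneg
    intro i _
    apply mul_nonneg (mul_nonneg (hS0 i) (Real.rpow_nonneg (Nat.cast_nonneg _) _))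
    exact Finset.prod_nonneg fun u _ => Real.rpow_nonneg (Nat.cast_nonneg _) _
  -- per-sample bound
  have hper : ∀ i ∈ Finset.range n,
      |∏ j, Leg (J j) (Uhat X n i j ω) - ∏ j, Leg (J j) (F j (X i j ω))| ≤ c * T := by
    intro i _
    have key := prod_diff_bound (Finset.univ : Finset (Fin p))
      (fun j => Leg (J j) (Uhat X n i j ω))
      (fun j => Leg (J j) (F j (X i j ω)))
      (fun j => Real.sqrt 3 * m j ^ ((1:ℝ)/2))
      (fun j => 2 * Real.sqrt 3 * m j ^ ((5:ℝ)/2) * S j)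
      (fun j _ => Leg_bound (J j) (ecdf_mem_Icc (fun i' => X i' j) n ω (X i j ω)))
      (fun j _ => Leg_bound (J j) (hF01 j (X i j ω)))
      (fun j _ => by
        calc |Leg (J j) (Uhat X n i j ω) - Leg (J j) (F j (X i j ω))|
            ≤ 2 * Real.sqrt 3 * m j ^ ((5:ℝ)/2) * |Uhat X n i j ω - F j (X i j ω)| :=
              Leg_lip (J j) (ecdf_mem_Icc (fun i' => X i' j) n ω (X i j ω))
                (hF01 j (X i j ω))
          _ ≤ 2 * Real.sqrt 3 * m j ^ ((5:ℝ)/2) * S j :=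
              mul_le_mul_of_nonneg_left (hSub j (X i j ω)) (by positivity))
    refine key.trans ?_
    rw [hT, Finset.mul_sum]
    apply le_of_eq
    refine Finset.sum_congr rfl fun j _ => ?_
    have hcard : (Finset.univ.erase j).card = p - 1 := by
      rw [Finset.card_erase_of_mem (Finset.mem_univ j), Finset.card_univ, Fintype.card_fin]
    have hprodM : ∏ u ∈ Finset.univ.erase j, (Real.sqrt 3 * m u ^ ((1:ℝ)/2))
        = Real.sqrt 3 ^ (p - 1) * ∏ u ∈ Finset.univ.erase j, m u ^ ((1:ℝ)/2) := by
      rw [Finset.prod_mul_distrib, Finset.prod_const, hcard]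
    rw [hprodM, hc]
    have hp1 : p - 1 + 1 = p := Nat.succ_pred_eq_of_pos j.pos
    have hpow : Real.sqrt 3 ^ p = Real.sqrt 3 ^ (p - 1) * Real.sqrt 3 := by
      rw [← pow_succ, hp1]
    rw [hpow]
    ring
  -- assembling
  have habs : |rhohat X n J ω
        - (n : ℝ)⁻¹ * ∑ i ∈ Finset.range n, ∏ j, Leg (J j) (F j (X i j ω))|
      ≤ (n : ℝ)⁻¹ * ∑ i ∈ Finset.range n,
          |∏ j, Leg (J j) (Uhat X n i j ω) - ∏ j, Leg (J j) (F j (X i j ω))| := by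
    rw [rhohat, ← mul_sub, ← Finset.sum_sub_distrib, abs_mul,
      abs_of_nonneg (by positivity : (0:ℝ) ≤ (n : ℝ)⁻¹)]
    exact mul_le_mul_of_nonneg_left (Finset.abs_sum_le_sum_abs _ _) (by positivity)
  refine habs.trans ?_
  calc (n : ℝ)⁻¹ * ∑ i ∈ Finset.range n,
          |∏ j, Leg (J j) (Uhat X n i j ω) - ∏ j, Leg (J j) (F j (X i j ω))|
      ≤ (n : ℝ)⁻¹ * ∑ _i ∈ Finset.range n, c * T :=
        mul_le_mul_of_nonneg_left (Finset.sum_le_sum hper) (by positivity)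
    _ = ((n : ℝ)⁻¹ * (n : ℝ)) * (c * T) := by
        rw [Finset.sum_const, Finset.card_range, nsmul_eq_mul]
        ring
    _ ≤ 1 * (c * T) := by
        apply mul_le_mul_of_nonneg_right _ (by positivity)
        rcases Nat.eq_zero_or_pos n with h | h
        · simp [h]
        · rw [inv_mul_cancel₀ (by exact_mod_cast h.ne' : (n:ℝ) ≠ 0)]
    _ = c * T := one_mul _


end
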